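/- Let T be a linear contraction on a Banach space X commuting with a projection P such that TP is quasi-compact. If there exists n0 ∈ ℕ with δ_P(T^{n0}) < 1, then T is quasi-compact. -/

import Mathlib

open Filter Topology

noncomputable def dobrushin {X : Type*} [NormedAddCommGroup X] [NormedSpace ℝ X]
    (P A : X →L[ℝ] X) : ℝ :=
  sSup {r : ℝ | ∃ x : X, P x = 0 ∧ x ≠ 0 ∧ r = ‖A x‖ / ‖x‖}

def QuasiCompact {X : Type*} [NormedAddCommGroup X] [NormedSpace ℝ X]
    (T : X →L[ℝ] X) : Prop :=
  ∃ n : ℕ, 0 < n ∧ ∃ K : X →L[ℝ] X, IsCompactOperator K ∧ ‖T ^ n - K‖ < 1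

/-!
Split `T ^ n = T ^ n * P + T ^ n * (1 - P)`. Since `T` commutes with the idempotent `P`, the first
term is `(T * P) ^ n`, and writing `(T * P) ^ m = K + R` with `K` compact and `‖R‖ < 1`, the power
`((T * P) ^ m) ^ j` is `R ^ j` plus a compact operator. The second term lives on `ker P`, which `T`
preserves and on which `T ^ n0` contracts by the factor `δ_P(T ^ n0) < 1`, so it decays
geometrically. For `n` a large common multiple, both `‖R ^ j‖` and `‖T ^ n * (1 - P)‖` are small.
-/

section

variable {X : Type*} [NormedAddCommGroup X] [NormedSpace ℝ X]

lemma dobrushin_nonneg (P A : X →L[ℝ] X) : 0 ≤ dobrushin P A :=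
  Real.sSup_nonneg <| by
    rintro r ⟨x, -, -, rfl⟩
    positivity

lemma norm_apply_le_dobrushin_mul {P A : X →L[ℝ] X} {x : X} (hx : P x = 0) :
    ‖A x‖ ≤ dobrushin P A * ‖x‖ := by
  rcases eq_or_ne x 0 with rfl | hx0
  · simp
  have hbdd : BddAbove {r : ℝ | ∃ x : X, P x = 0 ∧ x ≠ 0 ∧ r = ‖A x‖ / ‖x‖} := by
    refine ⟨‖A‖, ?_⟩
    rintro r ⟨y, -, -, rfl⟩
    exact div_le_of_le_mul₀ (norm_nonneg _) (norm_nonneg _) (A.le_opNorm y)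
  rw [← div_le_iff₀ (norm_pos_iff.mpr hx0)]
  exact le_csSup hbdd ⟨x, hx, hx0, rfl⟩

/-- For `n0 = 0` the hypothesis forces `ker P = 0`, so that `n = 1` works. -/
lemma exists_pos_pow_norm_apply_le_dobrushin {P T : X →L[ℝ] X} {n0 : ℕ}
    (hδ : dobrushin P (T ^ n0) < 1) :
    ∃ n, 0 < n ∧ ∀ x, P x = 0 → ‖(T ^ n) x‖ ≤ dobrushin P (T ^ n0) * ‖x‖ := by
  rcases Nat.eq_zero_or_pos n0 with rfl | hn0
  · refine ⟨1, one_pos, fun x hx => ?_⟩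
    have hle : ‖x‖ ≤ dobrushin P (T ^ 0) * ‖x‖ :=
      calc ‖x‖ = ‖(T ^ 0) x‖ := by simp
        _ ≤ _ := norm_apply_le_dobrushin_mul hx
    have hx0 : x = 0 := norm_le_zero_iff.mp <| by nlinarith [norm_nonneg x]
    simp [hx0]
  · exact ⟨n0, hn0, fun x hx => norm_apply_le_dobrushin_mul hx⟩

lemma norm_pow_apply_le_pow_mul {P A : X →L[ℝ] X} (hAP : Commute A P) {δ : ℝ} (hδ : 0 ≤ δ)
    (hA : ∀ x, P x = 0 → ‖A x‖ ≤ δ * ‖x‖) (k : ℕ) {x : X} (hx : P x = 0) :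
    ‖(A ^ k) x‖ ≤ δ ^ k * ‖x‖ := by
  induction k generalizing x with
  | zero => simp
  | succ k ih =>
    have hAx : P (A x) = 0 := by rw [← mul_apply_eq_comp, ← hAP.eq, mul_apply_eq_comp, hx, map_zero]
    calc ‖(A ^ (k + 1)) x‖ = ‖(A ^ k) (A x)‖ := by rw [pow_succ, mul_apply_eq_comp]
      _ ≤ δ ^ k * ‖A x‖ := ih hAx
      _ ≤ δ ^ k * (δ * ‖x‖) := by gcongr; exact hA x hx
      _ = δ ^ (k + 1) * ‖x‖ := by ring

lemma norm_pow_mul_one_sub_le {P A : X →L[ℝ] X} (hP : IsIdempotentElem P) (hAP : Commute A P)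
    {δ : ℝ} (hδ : 0 ≤ δ) (hA : ∀ x, P x = 0 → ‖A x‖ ≤ δ * ‖x‖) (k : ℕ) :
    ‖A ^ k * (1 - P)‖ ≤ δ ^ k * ‖1 - P‖ := by
  refine ContinuousLinearMap.opNorm_le_bound _ (by positivity) fun x => ?_
  have hPx : P ((1 - P) x) = 0 := by
    rw [← mul_apply_eq_comp, hP.mul_one_sub_self, zero_apply]
  calc ‖(A ^ k * (1 - P)) x‖ ≤ δ ^ k * ‖(1 - P) x‖ := norm_pow_apply_le_pow_mul hAP hδ hA k hPx
    _ ≤ δ ^ k * (‖1 - P‖ * ‖x‖) := by gcongr; exact (1 - P).le_opNorm x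
    _ = δ ^ k * ‖1 - P‖ * ‖x‖ := by ring

lemma exists_isCompactOperator_pow_eq_sub_pow_add (A K : X →L[ℝ] X) (hK : IsCompactOperator K)
    (j : ℕ) : ∃ C : X →L[ℝ] X, IsCompactOperator C ∧ A ^ j = (A - K) ^ j + C := by
  induction j with
  | zero => exact ⟨0, isCompactOperator_zero, by simp⟩
  | succ j ih =>
    obtain ⟨C, hC, hAj⟩ := ih
    refine ⟨(A - K) ^ j * K + C * A,
      (hK.continuous_comp ((A - K) ^ j).continuous).add (hC.comp_clm A), ?_⟩
    rw [pow_succ, hAj]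
    noncomm_ring

end

lemma eventually_pow_add_pow_mul_lt_one {a b : ℝ} (ha : 0 ≤ a) (ha1 : a < 1) (hb : 0 ≤ b)
    (hb1 : b < 1) (c : ℝ) : ∀ᶠ N : ℕ in atTop, a ^ N + b ^ N * c < 1 := by
  have hlim : Tendsto (fun N : ℕ => a ^ N + b ^ N * c) atTop (𝓝 (0 + 0 * c)) :=
    (tendsto_pow_atTop_nhds_zero_of_lt_one ha ha1).add
      ((tendsto_pow_atTop_nhds_zero_of_lt_one hb hb1).mul_const c)
  exact hlim.eventually (gt_mem_nhds (by simp))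

theorem stmt7_general {X : Type*} [NormedAddCommGroup X] [NormedSpace ℝ X]
    (P T : X →L[ℝ] X) (hP : P * P = P) (hcomm : T * P = P * T)
    (hqc : QuasiCompact (T * P))
    (n0 : ℕ) (hdelta : dobrushin P (T ^ n0) < 1) :
    QuasiCompact T := by
  obtain ⟨m, hm, K, hK, hR⟩ := hqc
  generalize hRdef : (T * P) ^ m - K = R at hR
  set δ := dobrushin P (T ^ n0)
  have hδ : 0 ≤ δ := dobrushin_nonneg P (T ^ n0)
  obtain ⟨n1, hn1, hker⟩ := exists_pos_pow_norm_apply_le_dobrushin hdelta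
  obtain ⟨N, hN, hsmall⟩ := ((eventually_gt_atTop 0).and <|
    eventually_pow_add_pow_mul_lt_one (pow_nonneg (norm_nonneg R) n1)
      (pow_lt_one₀ (norm_nonneg R) hR hn1.ne') (pow_nonneg hδ m)
      (pow_lt_one₀ hδ hdelta hm.ne') ‖1 - P‖).exists
  obtain ⟨C, hC, hCeq⟩ := exists_isCompactOperator_pow_eq_sub_pow_add ((T * P) ^ m) K hK (n1 * N)
  rw [hRdef] at hCeq
  have hpos : 0 < m * (n1 * N) := by positivity
  have hTP : T ^ (m * (n1 * N)) * P = ((T * P) ^ m) ^ (n1 * N) := by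
    rw [← pow_mul, Commute.mul_pow hcomm, IsIdempotentElem.pow_eq hP hpos.ne']
  have hTn1 : T ^ (m * (n1 * N)) = (T ^ n1) ^ (m * N) := by
    rw [← pow_mul, Nat.mul_left_comm]
  have hsplit : T ^ (m * (n1 * N)) - C = R ^ (n1 * N) + (T ^ n1) ^ (m * N) * (1 - P) := by
    rw [← hTn1, mul_sub, mul_one, hTP, hCeq]
    abel
  refine ⟨m * (n1 * N), hpos, C, hC, ?_⟩
  calc ‖T ^ (m * (n1 * N)) - C‖
      ≤ ‖R ^ (n1 * N)‖ + ‖(T ^ n1) ^ (m * N) * (1 - P)‖ := hsplit ▸ norm_add_le _ _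
    _ ≤ (‖R‖ ^ n1) ^ N + (δ ^ m) ^ N * ‖1 - P‖ :=
      add_le_add (pow_mul ‖R‖ n1 N ▸ norm_pow_le' R (by positivity))
        (pow_mul δ m N ▸ norm_pow_mul_one_sub_le hP (Commute.pow_left hcomm n1) hδ hker (m * N))
    _ < 1 := hsmall

theorem stmt7 {X : Type*} [NormedAddCommGroup X] [NormedSpace ℝ X] [CompleteSpace X]
    (P T : X →L[ℝ] X) (hP : P * P = P) (hT : ‖T‖ ≤ 1) (hcomm : T * P = P * T)
    (hqc : QuasiCompact (T * P))
    (n0 : ℕ) (hdelta : dobrushin P (T ^ n0) < 1) :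
    QuasiCompact T :=
  stmt7_general P T hP hcomm hqc n0 hdelta
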